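/- arXiv:1507.06805 — 5 statements merged into one kernel-verified Lean document; each statement's English description precedes it below -/
import Mathlib

section
/- Let m ≥ 1 be a natural number, let k be a natural number with k ≤ m − 1, let z be a nonzero complex number, and let 0 < r < |z|. Then (1/(2πi)) · ∮_{|η|=r} ((η/z)^m − 1)/(η − z) · η^(k−m) dη = z^(k−m). (This is the residue at η = 0 of the 11-entry of the Fredholm kernel K(z,η) of the model problem applied to η^{k−m}.) -/
/-! On the circle `|η| = r < |z|` the kernel is the geometric sum
`((η/z)^m - 1)/(η - z) = ∑_{j<m} η^j / z^(j+1)`, so the integrand is the Laurent polynomial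
`∑_{j<m} z^(-(j+1)) η^(j+k-m)`. Only the term `j = m - 1 - k` has exponent `-1`; it contributes
`2πi z^(k-m)` and all other terms integrate to zero. -/

open Complex Real Finset Metric

theorem div_pow_sub_one_div_sub_eq_sum {K : Type*} [Field K] {z η : K} (hz : z ≠ 0)
    (hηz : η ≠ z) (m : ℕ) :
    ((η / z) ^ m - 1) / (η - z) = ∑ j ∈ range m, η ^ j / z ^ (j + 1) := by
  have hq : η / z ≠ 1 := by rwa [ne_eq, div_eq_one_iff_eq hz]
  have hsub : η - z = (η / z - 1) * z := by field_simp
  rw [hsub, ← div_div, ← geom_sum_eq hq, sum_div]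
  refine sum_congr rfl fun j _ => ?_
  rw [div_pow, div_div, pow_succ]

theorem div_pow_sub_one_div_sub_mul_zpow_eq_sum {K : Type*} [Field K] {z η : K} (hz : z ≠ 0)
    (hη : η ≠ 0) (hηz : η ≠ z) (m : ℕ) (n : ℤ) :
    ((η / z) ^ m - 1) / (η - z) * η ^ n =
      ∑ j ∈ range m, (z ^ (j + 1))⁻¹ * η ^ ((j : ℤ) + n) := by
  rw [div_pow_sub_one_div_sub_eq_sum hz hηz, sum_mul]
  refine sum_congr rfl fun j _ => ?_
  rw [zpow_add₀ hη, zpow_natCast]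
  ring

theorem circleIntegral.integral_sub_zpow_of_mem_ball {c w : ℂ} {R : ℝ} (hw : w ∈ ball c R)
    (n : ℤ) : (∮ η in C(c, R), (η - w) ^ n) = if n = -1 then 2 * π * I else 0 := by
  split_ifs with hn
  · simpa [hn] using integral_sub_inv_of_mem_ball hw
  · exact integral_sub_zpow_of_ne hn c w R

theorem residue_K11 (m k : ℕ) (hm : 1 ≤ m) (hk : k ≤ m - 1)
    (z : ℂ) (hz : z ≠ 0) (r : ℝ) (hr : 0 < r) (hrz : r < ‖z‖) :
    (1 / (2 * Real.pi * Complex.I)) *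
        (∮ η in C(0, r), ((η / z) ^ m - 1) / (η - z) * η ^ ((k : ℤ) - m)) =
      z ^ ((k : ℤ) - m) := by
  have hexpand : Set.EqOn (fun η : ℂ => ((η / z) ^ m - 1) / (η - z) * η ^ ((k : ℤ) - m))
      (fun η => ∑ j ∈ range m, (z ^ (j + 1))⁻¹ * (η - 0) ^ ((j : ℤ) + (k - m)))
      (sphere 0 r) := by
    intro η hη
    have hηz : η ≠ z := by rintro rfl; simp_all
    simpa using div_pow_sub_one_div_sub_mul_zpow_eq_sum hz (ne_of_mem_sphere hη hr.ne') hηz m _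
  have hint (j : ℕ) (_ : j ∈ range m) :
      CircleIntegrable (fun η => (z ^ (j + 1))⁻¹ * (η - 0) ^ ((j : ℤ) + (k - m))) 0 r := by
    refine (circleIntegrable_sub_zpow_iff.mpr (Or.inr (Or.inr ?_))).const_mul _
    simpa using (abs_pos.mpr hr.ne').ne
  rw [circleIntegral.integral_congr hr.le hexpand, circleIntegral.integral_fun_sum hint]
  simp only [circleIntegral.integral_const_mul,
    circleIntegral.integral_sub_zpow_of_mem_ball (mem_ball_self hr)]
  have hres (j : ℕ) : (j : ℤ) + (k - m) = -1 ↔ j = m - 1 - k := by omega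
  rw [sum_eq_single_of_mem (m - 1 - k) (mem_range.mpr (by omega))
      fun j _ hne => by rw [if_neg ((hres j).not.mpr hne), mul_zero],
    if_pos ((hres _).mpr rfl),
    show (k : ℤ) - m = -((m - 1 - k + 1 : ℕ) : ℤ) by omega, zpow_neg, zpow_natCast]
  field_simp
end

section
/- Let m ≥ 1 be a natural number, let k be a natural number with k ≤ m − 1, let z be a nonzero complex number, and let 0 < r < |z|. Then (1/(2πi)) · ∮_{|η|=r} (e^η·z^m − e^z·η^m)/(η − z) · η^(k−m) dη = −z^k · e_{m−k}(z). (This is the residue at η = 0 of the 21-entry of the Fredholm kernel K(z,η) of the model problem applied to η^{k−m}.) -/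
open Complex Real

/-- Truncated exponential `e_k(z) = ∑_{i<k} z^i / i!`. -/
noncomputable def truncExp (k : ℕ) (z : ℂ) : ℂ :=
  ∑ i ∈ Finset.range k, z ^ i / (Nat.factorial i : ℂ)

/-!
With `m = k + n`, the integrand splits on the circle as a function holomorphic on the closed
disc, whose integral vanishes by Cauchy's theorem, minus the principal part
`∑_{i<n} z^(k+i) e^η / η^(i+1)`; by Cauchy's formula for the derivatives of `exp` at `0` the
latter integrates to `2πi z^k ∑_{i<n} z^i / i!`.
-/

open Finset Metric Nat

lemma circleIntegral_exp_div_pow {r : ℝ} (hr : 0 < r) (p : ℕ) :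
    (∮ η in C(0, r), cexp η / η ^ (p + 1)) = 2 * π * I / p ! := by
  have := (Complex.differentiable_exp.differentiableOn (s := closedBall 0 r))
    |>.circleIntegral_one_div_sub_center_pow_smul hr p
  simpa [iteratedDeriv_eq_iterate, Complex.iter_deriv_exp, div_eq_inv_mul] using this

lemma circleIntegrable_const_mul_exp_div_pow {r : ℝ} (hr : 0 < r) (c : ℂ) (p : ℕ) :
    CircleIntegrable (fun η ↦ c * cexp η / η ^ (p + 1)) 0 r :=
  ContinuousOn.circleIntegrable hr.le <|
    .div (by fun_prop) (by fun_prop) fun _ hη ↦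
      pow_ne_zero _ (ne_zero_of_mem_sphere hr.ne' ⟨_, hη⟩)

lemma circleIntegral_sum_pow_mul_exp_div_pow {r : ℝ} (hr : 0 < r) (z : ℂ) (k n : ℕ) :
    (∮ η in C(0, r), ∑ i ∈ range n, z ^ (k + i) * cexp η / η ^ (i + 1)) =
      2 * π * I * z ^ k * truncExp n z := by
  rw [circleIntegral.integral_fun_sum fun i _ ↦ circleIntegrable_const_mul_exp_div_pow hr _ i,
    truncExp, mul_sum]
  refine sum_congr rfl fun i _ ↦ ?_
  simp only [mul_div_assoc, circleIntegral.integral_const_mul, circleIntegral_exp_div_pow hr]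
  ring

lemma sum_pow_div_pow_mul_sub {K : Type*} [Field K] {z η : K} (hη : η ≠ 0) (k n : ℕ) :
    (∑ i ∈ range n, z ^ (k + i) / η ^ (i + 1)) * (η - z) = z ^ k - z ^ (k + n) / η ^ n := by
  have htelescope : ∀ i, z ^ (k + i) / η ^ (i + 1) * (η - z) =
      z ^ (k + i) / η ^ i - z ^ (k + (i + 1)) / η ^ (i + 1) := by
    intro i
    field_simp
    ring
  simp only [sum_mul, htelescope, sum_range_sub', pow_zero, add_zero, div_one]

lemma sub_div_sub_mul_zpow_neg_eq_sub_sum {K : Type*} [Field K] {a b z η : K}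
    (hη : η ≠ 0) (hηz : η ≠ z) (k n : ℕ) :
    (a * z ^ (k + n) - b * η ^ (k + n)) / (η - z) * η ^ (-(n : ℤ)) =
      (z ^ k * a - b * η ^ k) / (η - z) - ∑ i ∈ range n, z ^ (k + i) * a / η ^ (i + 1) := by
  have hsum := sum_pow_div_pow_mul_sub (z := z) hη k n
  rw [← eq_div_iff (sub_ne_zero.mpr hηz)] at hsum
  simp only [mul_div_right_comm _ a, ← sum_mul, hsum, zpow_neg, zpow_natCast]
  field_simp
  ring

theorem residue_K21_general (m k : ℕ) (hk : k ≤ m - 1)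
    (z : ℂ) (r : ℝ) (hr : 0 < r) (hrz : r < ‖z‖) :
    (1 / (2 * Real.pi * Complex.I)) *
        (∮ η in C(0, r),
          (Complex.exp η * z ^ m - Complex.exp z * η ^ m) / (η - z) * η ^ ((k : ℤ) - m)) =
      -z ^ k * truncExp (m - k) z := by
  obtain ⟨n, rfl⟩ : ∃ n, m = k + n := ⟨m - k, by omega⟩
  have hball : ∀ η ∈ closedBall (0 : ℂ) r, η ≠ z := by
    rintro η hη rfl
    rw [mem_closedBall_zero_iff] at hη
    linarith
  have hg : DifferentiableOn ℂ (fun η ↦ (z ^ k * cexp η - cexp z * η ^ k) / (η - z))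
      (closedBall 0 r) :=
    .div (by fun_prop) (by fun_prop) fun η hη ↦ sub_ne_zero.mpr (hball η hη)
  have hsplit : Set.EqOn
      (fun η ↦ (cexp η * z ^ (k + n) - cexp z * η ^ (k + n)) / (η - z) * η ^ (-(n : ℤ)))
      (fun η ↦ (z ^ k * cexp η - cexp z * η ^ k) / (η - z) -
        ∑ i ∈ range n, z ^ (k + i) * cexp η / η ^ (i + 1)) (sphere 0 r) := fun η hη ↦
    sub_div_sub_mul_zpow_neg_eq_sub_sum (ne_zero_of_mem_sphere hr.ne' ⟨η, hη⟩)
      (hball η (sphere_subset_closedBall hη)) k n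
  have hzpow : ((k : ℤ) - (k + n : ℕ)) = -(n : ℤ) := by push_cast; ring
  rw [hzpow, circleIntegral.integral_congr hr.le hsplit,
    circleIntegral.integral_sub (hg.continuousOn.mono sphere_subset_closedBall
      |>.circleIntegrable hr.le)
      (.fun_sum _ fun i _ ↦ circleIntegrable_const_mul_exp_div_pow hr _ i),
    (hg.mono closure_ball_subset_closedBall).diffContOnCl.circleIntegral_eq_zero hr.le,
    circleIntegral_sum_pow_mul_exp_div_pow hr, Nat.add_sub_cancel_left]
  field_simp
  ring

theorem residue_K21 (m k : ℕ) (hm : 1 ≤ m) (hk : k ≤ m - 1)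
    (z : ℂ) (hz : z ≠ 0) (r : ℝ) (hr : 0 < r) (hrz : r < ‖z‖) :
    (1 / (2 * Real.pi * Complex.I)) *
        (∮ η in C(0, r),
          (Complex.exp η * z ^ m - Complex.exp z * η ^ m) / (η - z) * η ^ ((k : ℤ) - m)) =
      -z ^ k * truncExp (m - k) z :=
  residue_K21_general m k hk z r hr hrz
end

section
/- Let m ≥ 1 be a natural number. The family of complex polynomials q_j(X) = X^j · e_{m−j}(X) for j = 0, 1, …, m − 1, where e_k(X) = Σ_{i=0}^{k−1} X^i/i!, is linearly independent over ℂ, each q_j has degree m − 1, and the family spans the space of complex polynomials of degree at most m − 1. In particular, for every k with 0 ≤ k ≤ m − 1 there exist unique coefficients a_{k0}, …, a_{k,m−1} ∈ ℂ with X^k = Σ_{j=0}^{m−1} a_{kj} · X^j · e_{m−j}(X). -/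
/-! The polynomial `X^j e_{m-j}(X)` has coefficients `1/(n-j)!` exactly for `j ≤ n < m`, so it
lies in `degreeLT ℂ m`, starts with the monomial `X^j` and has top coefficient `1/(m-1-j)! ≠ 0`.
Its coefficient matrix in the monomial basis is therefore unitriangular: the `m` polynomials are
independent, and by counting dimensions they span `degreeLT ℂ m`. -/

open Polynomial

/-- Truncated exponential as a polynomial: `e_k(X) = ∑_{i<k} X^i / i!`. -/
noncomputable def truncExpPoly (k : ℕ) : Polynomial ℂ :=
  ∑ i ∈ Finset.range k, Polynomial.C ((Nat.factorial i : ℂ)⁻¹) * Polynomial.X ^ i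

theorem Polynomial.linearIndependent_of_coeff_lowerTriangular {R : Type*} [CommRing R]
    [IsDomain R] {m : ℕ} (v : Fin m → R[X]) (hlt : ∀ i j : Fin m, i < j → (v j).coeff i = 0)
    (hdiag : ∀ j : Fin m, (v j).coeff j ≠ 0) : LinearIndependent R v := by
  let A : Matrix (Fin m) (Fin m) R := Matrix.of fun i j => (v j).coeff i
  have hA : A.det ≠ 0 := by
    rw [Matrix.det_of_isLowerTriangular A fun i j hij => hlt i j hij]
    exact Finset.prod_ne_zero_iff.2 fun j _ => hdiag j
  let coeffs : R[X] →ₗ[R] Fin m → R := LinearMap.pi fun i => lcoeff R i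
  exact LinearIndependent.of_comp coeffs (Matrix.linearIndependent_cols_of_det_ne_zero hA)

theorem Polynomial.span_eq_degreeLT_of_linearIndependent {K : Type*} [Field K] {m : ℕ}
    {v : Fin m → K[X]} (hv : LinearIndependent K v) (hmem : ∀ j, v j ∈ degreeLT K m) :
    Submodule.span K (Set.range v) = degreeLT K m := by
  have := Module.Finite.of_basis (degreeLT.basis K m)
  refine Submodule.eq_of_le_of_finrank_eq (Submodule.span_le.2 (Set.range_subset_iff.2 hmem)) ?_
  rw [finrank_span_eq_card hv, Module.finrank_eq_card_basis (degreeLT.basis K m)]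

theorem LinearIndependent.existsUnique_sum_smul_eq {R M ι : Type*} [Ring R] [AddCommGroup M]
    [Module R M] [Fintype ι] {v : ι → M} (hv : LinearIndependent R v) {x : M}
    (hx : x ∈ Submodule.span R (Set.range v)) : ∃! c : ι → R, ∑ i, c i • v i = x := by
  obtain ⟨c, rfl⟩ := (Submodule.mem_span_range_iff_exists_fun R).1 hx
  refine ⟨c, rfl, fun d hd => hv.fintypeLinearCombination_injective ?_⟩
  simpa only [Fintype.linearCombination_apply] using hd

theorem coeff_truncExpPoly (k n : ℕ) :
    (truncExpPoly k).coeff n = if n < k then (n.factorial : ℂ)⁻¹ else 0 := by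
  simp [truncExpPoly, coeff_C_mul, coeff_X_pow]

theorem coeff_X_pow_mul_truncExpPoly (m j n : ℕ) :
    ((X : ℂ[X]) ^ j * truncExpPoly (m - j)).coeff n =
      if j ≤ n ∧ n < m then ((n - j).factorial : ℂ)⁻¹ else 0 := by
  rw [mul_comm, coeff_mul_X_pow', coeff_truncExpPoly]
  split_ifs <;> first | rfl | omega

theorem degree_X_pow_mul_truncExpPoly {m j : ℕ} (hj : j < m) :
    ((X : ℂ[X]) ^ j * truncExpPoly (m - j)).degree = (m - 1 : ℕ) := by
  refine degree_eq_of_le_of_coeff_ne_zero ((degree_le_iff_coeff_zero _ _).2 fun n hn => ?_) ?_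
  · rw [coeff_X_pow_mul_truncExpPoly, if_neg (by norm_cast at hn; omega)]
  · rw [coeff_X_pow_mul_truncExpPoly, if_pos (by omega)]
    exact inv_ne_zero (mod_cast (m - 1 - j).factorial_ne_zero)

theorem basis_of_truncExp_polynomials (m : ℕ) (hm : 1 ≤ m) :
    LinearIndependent ℂ
        (fun j : Fin m => (Polynomial.X : Polynomial ℂ) ^ (j : ℕ) * truncExpPoly (m - j)) ∧
      (∀ j : Fin m,
        ((Polynomial.X : Polynomial ℂ) ^ (j : ℕ) * truncExpPoly (m - j)).degree
          = (m - 1 : ℕ)) ∧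
      Submodule.span ℂ
          (Set.range fun j : Fin m =>
            (Polynomial.X : Polynomial ℂ) ^ (j : ℕ) * truncExpPoly (m - j))
        = Polynomial.degreeLT ℂ m ∧
      ∀ k : ℕ, k ≤ m - 1 →
        ∃! a : Fin m → ℂ,
          (Polynomial.X : Polynomial ℂ) ^ k =
            ∑ j : Fin m,
              Polynomial.C (a j) * (Polynomial.X ^ (j : ℕ) * truncExpPoly (m - j)) := by
  have hdeg (j : Fin m) := degree_X_pow_mul_truncExpPoly (m := m) j.isLt
  have hli :
      LinearIndependent ℂ fun j : Fin m => (X : ℂ[X]) ^ (j : ℕ) * truncExpPoly (m - j) := by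
    refine linearIndependent_of_coeff_lowerTriangular _ (fun i j hij => ?_) fun j => ?_
    · rw [coeff_X_pow_mul_truncExpPoly, if_neg (by omega)]
    · simp [coeff_X_pow_mul_truncExpPoly]
  have hspan := span_eq_degreeLT_of_linearIndependent hli fun j => by
    rw [mem_degreeLT, hdeg j, Nat.cast_lt]
    omega
  refine ⟨hli, hdeg, hspan, fun k hk => ?_⟩
  have hXk : (X : ℂ[X]) ^ k ∈ degreeLT ℂ m := by
    rw [mem_degreeLT, degree_X_pow, Nat.cast_lt]
    omega
  rw [← hspan] at hXk
  simpa only [← smul_eq_C_mul, eq_comm] using hli.existsUnique_sum_smul_eq hXk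
end

section
/- Let m ≥ 1 and 0 ≤ k ≤ m − 1 be natural numbers and let p be a complex polynomial of degree at most m − 1 such that ζ^k = Σ_{j=0}^{m−1} (coeff_j p) · ζ^j · e_{m−j}(ζ) for all ζ ∈ ℂ. Define u(η) = −2·η^(−m)·p(η) for η ≠ 0. Then for every complex number z ≠ 0 and every radius r with 0 < r < |z|, the pair (u(z), z^k) satisfies: (i) (1/(2πi)) · ∮_{|η|=r} ((η/z)^m − 1)/(η − z) · u(η) dη = u(z), and (ii) (1/(2πi)) · ∮_{|η|=r} [ (e^η·z^m − e^z·η^m)/(η − z) · u(η) + ((z/η)^m − 1)/(η − z) · η^k ] dη = z^k. (These pairs span the 2m-dimensional kernel of the Fredholm integral equation of the model Riemann–Hilbert problem.) -/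
/-!
On the circle `|η| = r` the point `z` lies outside, so each integrand is `Q(η) / η ^ m` for a
polynomial `Q`, plus a function holomorphic on the closed disc; the integral then picks out
`2πi` times the coefficient of `η ^ (m - 1)` in `Q`. Both kernel entries contain
`(η ^ m - z ^ m) / (η - z) = ∑ η ^ i z ^ (m - 1 - i)`, and the coefficient of `η ^ (m - 1)` in
`Q(η) · ∑ η ^ i z ^ (m - 1 - i)` is `Q(z)` when `deg Q < m`. For (i), `Q` is a multiple of `p`.
For (ii), the hypothesis on `p` says exactly that `e^η p(η) = η ^ k + η ^ m F(η)` with `F` entire,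
so after discarding holomorphic terms only `η ^ k · ∑ η ^ i z ^ (m - 1 - i) / η ^ m` survives.
-/

open Complex Real

open Polynomial Finset Function Metric

/-- `expTail n ζ = (exp ζ - truncExp n ζ) / ζ ^ n`, extended holomorphically to `ζ = 0`. -/
noncomputable def expTail (n : ℕ) : ℂ → ℂ := (swap dslope 0)^[n] Complex.exp

lemma expTail_succ (n : ℕ) : expTail (n + 1) = dslope (expTail n) 0 :=
  iterate_succ_apply' _ _ _

lemma differentiable_expTail (n : ℕ) : Differentiable ℂ (expTail n) := by
  induction n with
  | zero => exact Complex.differentiable_exp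
  | succ n ih =>
    rw [expTail_succ, ← differentiableOn_univ, differentiableOn_dslope Filter.univ_mem]
    exact ih.differentiableOn

lemma expTail_apply_zero (n : ℕ) : expTail n 0 = (Nat.factorial n : ℂ)⁻¹ := by
  have hexp : HasFPowerSeriesAt Complex.exp (NormedSpace.expSeries ℂ ℂ) 0 := by
    rw [Complex.exp_eq_exp_ℂ]; exact NormedSpace.exp_hasFPowerSeriesAt_zero
  rw [expTail, ← (hexp.has_fpower_series_iterate_dslope_fslope n).coeff_zero 1,
    ← FormalMultilinearSeries.coeff, FormalMultilinearSeries.coeff_iterate_fslope, zero_add,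
    FormalMultilinearSeries.coeff]
  simp [NormedSpace.expSeries, List.prod_ofFn]

lemma exp_eq_truncExp_add_pow_mul_expTail (n : ℕ) (ζ : ℂ) :
    Complex.exp ζ = truncExp n ζ + ζ ^ n * expTail n ζ := by
  induction n with
  | zero => simp [truncExp, expTail]
  | succ n ih =>
    have h := sub_smul_dslope (expTail n) 0 ζ
    rw [← expTail_succ, expTail_apply_zero, smul_eq_mul, sub_zero] at h
    rw [truncExp, sum_range_succ, ← truncExp, ih]
    linear_combination (-ζ ^ n) * h

lemma exists_exp_mul_eval_eq_add_pow_mul {m : ℕ} {p : ℂ[X]} (hp : p.natDegree < m) :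
    ∃ F : ℂ → ℂ, Differentiable ℂ F ∧ ∀ ζ, Complex.exp ζ * p.eval ζ =
      ∑ j ∈ range m, p.coeff j * ζ ^ j * truncExp (m - j) ζ + ζ ^ m * F ζ := by
  refine ⟨fun ζ ↦ ∑ j ∈ range m, p.coeff j * expTail (m - j) ζ,
    Differentiable.fun_sum fun j _ ↦ (differentiable_expTail _).const_mul _, fun ζ ↦ ?_⟩
  rw [eval_eq_sum_range' hp, mul_sum, mul_sum, ← sum_add_distrib]
  refine sum_congr rfl fun j hj ↦ ?_
  have hpow : ζ ^ j * ζ ^ (m - j) = ζ ^ m := by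
    rw [← pow_add, Nat.add_sub_cancel' (mem_range.mp hj).le]
  rw [exp_eq_truncExp_add_pow_mul_expTail (m - j) ζ]
  linear_combination p.coeff j * expTail (m - j) ζ * hpow

lemma circleIntegral_zpow {r : ℝ} (hr : 0 < r) (n : ℤ) :
    (∮ η in C(0, r), η ^ n) = if n = -1 then 2 * π * I else 0 := by
  split_ifs with hn
  · simpa [hn] using
      circleIntegral.integral_sub_inv_of_mem_ball (mem_ball_self hr : (0 : ℂ) ∈ ball 0 r)
  · simpa using circleIntegral.integral_sub_zpow_of_ne hn 0 0 r

lemma circleIntegral_eval_div_pow_succ {r : ℝ} (hr : 0 < r) (P : ℂ[X]) (n : ℕ) :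
    (∮ η in C(0, r), P.eval η / η ^ (n + 1)) = 2 * π * I * P.coeff n := by
  have hN : P.natDegree < P.natDegree + n + 1 := by omega
  have hsum : Set.EqOn (fun η ↦ P.eval η / η ^ (n + 1))
      (fun η ↦ ∑ j ∈ range (P.natDegree + n + 1), P.coeff j * η ^ ((j : ℤ) - (n + 1)))
      (sphere 0 r) := by
    intro η hη
    have hη0 : η ≠ 0 := ne_of_mem_sphere hη hr.ne'
    simp only [eval_eq_sum_range' hN, sum_div, zpow_sub₀ hη0, zpow_natCast, mul_div_assoc]
    norm_cast
  have hint : ∀ j : ℕ, CircleIntegrable (fun η ↦ P.coeff j * η ^ ((j : ℤ) - (n + 1))) 0 r := by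
    intro j
    refine ContinuousOn.circleIntegrable hr.le fun η hη ↦ ?_
    exact (continuousAt_const.mul (continuousAt_zpow₀ η _
      (Or.inl (ne_of_mem_sphere hη hr.ne')))).continuousWithinAt
  have hres : ∀ j : ℕ, (j : ℤ) - (n + 1) = -1 ↔ j = n := by omega
  rw [circleIntegral.integral_congr hr.le hsum, circleIntegral.integral_fun_sum fun j _ ↦ hint j]
  simp only [circleIntegral.integral_const_mul, circleIntegral_zpow hr, hres, mul_ite, mul_zero,
    sum_ite_eq', mem_range, show n < P.natDegree + n + 1 by omega, if_true]
  ring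

lemma circleIntegral_eval_div_pow_succ_add {r : ℝ} (hr : 0 < r) (P : ℂ[X]) (n : ℕ)
    {H : ℂ → ℂ} (hH : DifferentiableOn ℂ H (closedBall 0 r)) :
    (∮ η in C(0, r), (P.eval η / η ^ (n + 1) + H η)) = 2 * π * I * P.coeff n := by
  have hint : CircleIntegrable (fun η ↦ P.eval η / η ^ (n + 1)) 0 r :=
    ContinuousOn.circleIntegrable hr.le fun η hη ↦ (P.continuousAt.div (continuousAt_pow _ _)
      (pow_ne_zero _ (ne_of_mem_sphere hη hr.ne'))).continuousWithinAt
  rw [circleIntegral.integral_add hint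
      ((hH.continuousOn.mono sphere_subset_closedBall).circleIntegrable hr.le),
    circleIntegral_eval_div_pow_succ hr,
    (hH.diffContOnCl_ball subset_rfl).circleIntegral_eq_zero hr.le, add_zero]

noncomputable def geomPoly (n : ℕ) (z : ℂ) : ℂ[X] := ∑ i ∈ range n, C (z ^ (n - 1 - i)) * X ^ i

lemma eval_geomPoly_mul_sub (n : ℕ) (z η : ℂ) :
    (geomPoly n z).eval η * (η - z) = η ^ n - z ^ n := by
  simp only [geomPoly, eval_finsetSum, eval_mul, eval_C, eval_pow, eval_X]
  rw [← geom_sum₂_mul]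
  congr 1
  exact sum_congr rfl fun i _ ↦ mul_comm _ _

lemma coeff_geomPoly_succ {n b : ℕ} (hb : b ≤ n) (z : ℂ) :
    (geomPoly (n + 1) z).coeff b = z ^ (n - b) := by
  simp only [geomPoly, finsetSum_coeff, coeff_C_mul_X_pow, Nat.add_sub_cancel]
  rw [sum_ite_eq, if_pos (mem_range.mpr (Nat.lt_succ_of_le hb))]

lemma coeff_mul_geomPoly_succ {Q : ℂ[X]} {n : ℕ} (hQ : Q.natDegree ≤ n) (z : ℂ) :
    (Q * geomPoly (n + 1) z).coeff n = Q.eval z := by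
  rw [coeff_mul, Nat.sum_antidiagonal_eq_sum_range_succ_mk,
    eval_eq_sum_range' (Nat.lt_succ_of_le hQ)]
  refine sum_congr rfl fun j hj ↦ ?_
  have hj : j ≤ n := Nat.lt_succ_iff.mp (mem_range.mp hj)
  rw [coeff_geomPoly_succ (Nat.sub_le n j), Nat.sub_sub_self hj]

lemma fredholm_first_row {n : ℕ} {p : ℂ[X]} (hp : p.natDegree ≤ n) {u : ℂ → ℂ}
    (hu : ∀ η : ℂ, η ≠ 0 → u η = -2 * (η ^ (n + 1))⁻¹ * p.eval η) {z : ℂ} (hz : z ≠ 0)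
    {r : ℝ} (hr : 0 < r) (hrz : r < ‖z‖) :
    (1 / (2 * π * I)) * (∮ η in C(0, r), ((η / z) ^ (n + 1) - 1) / (η - z) * u η) = u z := by
  have hpt : Set.EqOn (fun η ↦ ((η / z) ^ (n + 1) - 1) / (η - z) * u η)
      (fun η ↦ (C (-2 / z ^ (n + 1)) * p * geomPoly (n + 1) z).eval η / η ^ (n + 1))
      (sphere 0 r) := by
    intro η hη
    have hη0 : η ≠ 0 := ne_of_mem_sphere hη hr.ne'
    have hηz : η - z ≠ 0 := sub_ne_zero.mpr fun h ↦ by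
      rw [h, mem_sphere_zero_iff_norm] at hη; exact hrz.ne' hη
    simp only [hu η hη0, eval_mul, eval_C]
    have hG := eval_geomPoly_mul_sub (n + 1) z η
    rw [div_pow]
    field_simp
    linear_combination p.eval η * hG
  rw [circleIntegral.integral_congr hr.le hpt, circleIntegral_eval_div_pow_succ hr,
    mul_assoc (C _), coeff_C_mul, coeff_mul_geomPoly_succ hp, hu z hz]
  field_simp

lemma fredholm_second_row {n k : ℕ} (hk : k ≤ n) {p : ℂ[X]} (hp : p.natDegree ≤ n)
    (hrep : ∀ ζ : ℂ, ζ ^ k = ∑ j ∈ range (n + 1), p.coeff j * ζ ^ j * truncExp (n + 1 - j) ζ)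
    {u : ℂ → ℂ} (hu : ∀ η : ℂ, η ≠ 0 → u η = -2 * (η ^ (n + 1))⁻¹ * p.eval η) {z : ℂ}
    {r : ℝ} (hr : 0 < r) (hrz : r < ‖z‖) :
    (1 / (2 * π * I)) * (∮ η in C(0, r),
      ((Complex.exp η * z ^ (n + 1) - Complex.exp z * η ^ (n + 1)) / (η - z) * u η +
        ((z / η) ^ (n + 1) - 1) / (η - z) * η ^ k)) = z ^ k := by
  obtain ⟨F, hF, hexp⟩ := exists_exp_mul_eval_eq_add_pow_mul (Nat.lt_add_one_of_le hp)
  simp only [← hrep] at hexp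
  have hball : ∀ η ∈ closedBall (0 : ℂ) r, η - z ≠ 0 := fun η hη ↦ sub_ne_zero.mpr fun h ↦ by
    rw [h, mem_closedBall_zero_iff] at hη; linarith
  set H : ℂ → ℂ := fun η ↦ 2 * F η * (geomPoly (n + 1) z).eval η -
    2 * p.eval η * (Complex.exp η - Complex.exp z) / (η - z)
  have hH : DifferentiableOn ℂ H (closedBall 0 r) := fun η hη ↦ by
    have := hball η hη
    refine DifferentiableAt.differentiableWithinAt ?_
    simp only [H]
    fun_prop (disch := assumption)
  have hpt : Set.EqOn (fun η ↦ (Complex.exp η * z ^ (n + 1) - Complex.exp z * η ^ (n + 1)) /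
        (η - z) * u η + ((z / η) ^ (n + 1) - 1) / (η - z) * η ^ k)
      (fun η ↦ (X ^ k * geomPoly (n + 1) z).eval η / η ^ (n + 1) + H η) (sphere 0 r) := by
    intro η hη
    have hη0 : η ≠ 0 := ne_of_mem_sphere hη hr.ne'
    have hηz := hball η (sphere_subset_closedBall hη)
    simp only [H, hu η hη0, eval_mul, eval_pow, eval_X]
    have hG := eval_geomPoly_mul_sub (n + 1) z η
    have hE := hexp η
    rw [div_pow]
    field_simp
    linear_combination
      (-η ^ k - 2 * η ^ (n + 1) * F η) * hG + 2 * (η ^ (n + 1) - z ^ (n + 1)) * hE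
  rw [circleIntegral.integral_congr hr.le hpt, circleIntegral_eval_div_pow_succ_add hr _ _ hH,
    coeff_mul_geomPoly_succ ((natDegree_X_pow_le k).trans hk), eval_X_pow]
  field_simp

theorem kernel_columns_of_fredholm_equation (m k : ℕ) (hm : 1 ≤ m) (hk : k ≤ m - 1)
    (p : Polynomial ℂ) (hp : p.degree ≤ (m - 1 : ℕ))
    (hrep : ∀ ζ : ℂ, ζ ^ k = ∑ j ∈ Finset.range m, p.coeff j * ζ ^ j * truncExp (m - j) ζ)
    (u : ℂ → ℂ) (hu : ∀ η : ℂ, η ≠ 0 → u η = -2 * η ^ (-(m : ℤ)) * p.eval η)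
    (z : ℂ) (hz : z ≠ 0) (r : ℝ) (hr : 0 < r) (hrz : r < ‖z‖) :
    (1 / (2 * Real.pi * Complex.I)) *
        (∮ η in C(0, r), ((η / z) ^ m - 1) / (η - z) * u η) = u z ∧
      (1 / (2 * Real.pi * Complex.I)) *
          (∮ η in C(0, r),
            ((Complex.exp η * z ^ m - Complex.exp z * η ^ m) / (η - z) * u η +
              ((z / η) ^ m - 1) / (η - z) * η ^ k)) = z ^ k := by
  obtain ⟨n, rfl⟩ := Nat.exists_eq_add_of_le' hm
  rw [Nat.add_sub_cancel] at hk hp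
  have hpn : p.natDegree ≤ n := natDegree_le_iff_degree_le.mpr hp
  simp only [zpow_neg, zpow_natCast] at hu
  exact ⟨fredholm_first_row hpn hu hz hr hrz, fredholm_second_row hk hpn hrep hu hr hrz⟩
end

section
/- Let a be a real number with 0 < a < 2, let x₀ = e^{iaπ/4}, and let x₁ = x₀·(x₀² + a − 1)/(i·((a−1)·x₀² + 1)). Then (a−1)·x₀² + 1 ≠ 0 and |x₁| = 1. (This shows the initial data of the discrete Painlevé II recurrence lie on the unit circle, consistent with the invariant |x_n| = 1 of the separatrix solution encoding the diagonal of the discrete map Z^a.) -/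
/-! With `z = x₀²` on the unit circle, `z * conj z = 1` gives `(a - 1) z + 1 = z * conj (z + a - 1)`,
so numerator and denominator of `x₁` have the same modulus. That modulus is nonzero because
`Im (z + a - 1) = sin (a π / 2) > 0` for `0 < a < 2`. -/

open Complex ComplexConjugate

namespace Complex

theorem ofReal_mul_add_one_eq_mul_conj {z : ℂ} (hz : ‖z‖ = 1) (r : ℝ) :
    (r : ℂ) * z + 1 = z * conj (z + r) := by
  have hzz : z * conj z = 1 := by
    rw [mul_conj, normSq_eq_norm_sq, hz]; norm_num
  rw [map_add, conj_ofReal, mul_add, hzz]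
  ring

theorem norm_ofReal_mul_add_one {z : ℂ} (hz : ‖z‖ = 1) (r : ℝ) :
    ‖(r : ℂ) * z + 1‖ = ‖z + r‖ := by
  rw [ofReal_mul_add_one_eq_mul_conj hz, norm_mul, hz, norm_conj, one_mul]

theorem ofReal_mul_add_one_ne_zero {z : ℂ} (hz : ‖z‖ = 1) (him : z.im ≠ 0) (r : ℝ) :
    (r : ℂ) * z + 1 ≠ 0 := by
  rw [← norm_ne_zero_iff, norm_ofReal_mul_add_one hz, norm_ne_zero_iff]
  intro h
  exact him (by simpa using congrArg im h)

theorem norm_mul_add_div_I_mul_ofReal_mul_add_one {x : ℂ} (hx : ‖x‖ = 1) (r : ℝ)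
    (h : (r : ℂ) * x ^ 2 + 1 ≠ 0) :
    ‖x * (x ^ 2 + r) / (I * ((r : ℂ) * x ^ 2 + 1))‖ = 1 := by
  have hx2 : ‖x ^ 2‖ = 1 := by rw [norm_pow, hx, one_pow]
  rw [norm_div, norm_mul, norm_mul, hx, norm_I, one_mul, one_mul,
    norm_ofReal_mul_add_one hx2, div_self]
  rwa [← norm_ofReal_mul_add_one hx2, norm_ne_zero_iff]

theorem exp_I_mul_mul_pi_div_four_sq (a : ℝ) :
    exp (I * a * Real.pi / 4) ^ 2 = exp (↑(a * Real.pi / 2) * I) := by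
  rw [← exp_nat_mul]
  push_cast
  ring_nf

theorem norm_exp_I_mul_mul_pi_div_four (a : ℝ) : ‖exp (I * a * Real.pi / 4)‖ = 1 := by
  rw [show I * a * Real.pi / 4 = ↑(a * Real.pi / 4) * I by push_cast; ring]
  exact norm_exp_ofReal_mul_I _

theorem im_exp_I_mul_mul_pi_div_four_sq_pos {a : ℝ} (ha : 0 < a) (ha2 : a < 2) :
    0 < (exp (I * a * Real.pi / 4) ^ 2).im := by
  rw [exp_I_mul_mul_pi_div_four_sq, exp_ofReal_mul_I_im]
  apply Real.sin_pos_of_pos_of_lt_pi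
  · positivity
  · nlinarith [Real.pi_pos]

end Complex

theorem painleveII_initial_data_on_unit_circle (a : ℝ) (ha : 0 < a) (ha2 : a < 2) :
    ((a : ℂ) - 1) * Complex.exp (Complex.I * a * Real.pi / 4) ^ 2 + 1 ≠ 0 ∧
      ‖(Complex.exp (Complex.I * a * Real.pi / 4) *
            (Complex.exp (Complex.I * a * Real.pi / 4) ^ 2 + (a : ℂ) - 1) /
          (Complex.I *
            (((a : ℂ) - 1) * Complex.exp (Complex.I * a * Real.pi / 4) ^ 2 + 1)))‖ = 1 := by
  set x₀ := Complex.exp (Complex.I * a * Real.pi / 4)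
  have hx₀ : ‖x₀‖ = 1 := norm_exp_I_mul_mul_pi_div_four a
  have hx₀_sq : ‖x₀ ^ 2‖ = 1 := by rw [norm_pow, hx₀, one_pow]
  have hcoeff : (a : ℂ) - 1 = ((a - 1 : ℝ) : ℂ) := by push_cast; ring
  have hden : ((a - 1 : ℝ) : ℂ) * x₀ ^ 2 + 1 ≠ 0 :=
    ofReal_mul_add_one_ne_zero hx₀_sq (im_exp_I_mul_mul_pi_div_four_sq_pos ha ha2).ne' _
  rw [add_sub_assoc, hcoeff]
  exact ⟨hden, norm_mul_add_div_I_mul_ofReal_mul_add_one hx₀ _ hden⟩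
end
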